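/- arXiv:2503.12518 — 8 statements merged into one kernel-verified Lean document; each statement's English description precedes it below -/
import Mathlib

section
/- For every two discrete probability distributions μ and τ over a finite set Ω, there exists a permutation π of Ω such that the total variation distance between μ and the pushforward of τ under π is at most 2·D_H(μ;τ), where D_H is the histogram divergence. -/
/-!
Keep the witnessing permutation π. Since μ and τ ∘ π have the same total mass, the ℓ¹ distance
between them is twice the mass of the positive part of μ - τ ∘ π. On the points where
μ ≤ (1 + ε) τ ∘ π that positive part is at most ε τ ∘ π, contributing at most ε in total; on the
remaining points it is at most μ, and these carry μ-mass at most ε by hypothesis.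
-/

open Finset

lemma sum_abs_sub_eq_two_mul_sum_posPart {ι : Type*} (s : Finset ι) {f g : ι → ℝ}
    (hfg : ∑ x ∈ s, f x = ∑ x ∈ s, g x) :
    ∑ x ∈ s, |f x - g x| = 2 * ∑ x ∈ s, (f x - g x)⁺ := by
  have hsum : ∑ x ∈ s, (f x - g x) = 0 := by rw [sum_sub_distrib, hfg, sub_self]
  have h := sum_congr rfl fun x (_ : x ∈ s) => abs_add_eq_two_nsmul_posPart (f x - g x)
  rw [sum_add_distrib, hsum, add_zero, ← smul_sum, two_nsmul] at h
  rw [h, two_mul]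

lemma posPart_sub_le_mul_of_le_one_add_mul {a b ε : ℝ} (hε : 0 ≤ ε) (hb : 0 ≤ b)
    (hab : a ≤ (1 + ε) * b) : (a - b)⁺ ≤ ε * b :=
  sup_le (by linarith) (mul_nonneg hε hb)

lemma posPart_sub_le_self {a b : ℝ} (ha : 0 ≤ a) (hb : 0 ≤ b) : (a - b)⁺ ≤ a :=
  sup_le (by linarith) ha

lemma sum_posPart_sub_le {ι : Type*} (s : Finset ι) {f g : ι → ℝ} {ε : ℝ}
    (p : ι → Prop) [DecidablePred p] (hε : 0 ≤ ε) (hf : ∀ x, 0 ≤ f x) (hg : ∀ x, 0 ≤ g x)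
    (hp : ∀ x, p x → f x ≤ (1 + ε) * g x) :
    ∑ x ∈ s, (f x - g x)⁺ ≤ ε * ∑ x ∈ s, g x + ∑ x ∈ s with ¬ p x, f x := by
  rw [← sum_filter_add_sum_filter_not s p]
  refine add_le_add ?_ (sum_le_sum fun x _ => posPart_sub_le_self (hf x) (hg x))
  calc ∑ x ∈ s with p x, (f x - g x)⁺
      ≤ ∑ x ∈ s with p x, ε * g x :=
        sum_le_sum fun x hx =>
          posPart_sub_le_mul_of_le_one_add_mul hε (hg x) (hp x (mem_filter.mp hx).2)
    _ = ε * ∑ x ∈ s with p x, g x := (mul_sum _ _ _).symm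
    _ ≤ ε * ∑ x ∈ s, g x :=
        mul_le_mul_of_nonneg_left
          (sum_le_sum_of_subset_of_nonneg (filter_subset p s) fun x _ _ => hg x) hε

theorem dtv_permutation_le_twice_dhist_general {Ω : Type*} [Fintype Ω]
    (μ τ : Ω → ℝ)
    (hμ0 : ∀ x, 0 ≤ μ x) (hμ1 : ∑ x, μ x = 1)
    (hτ0 : ∀ x, 0 ≤ τ x) (hτ1 : ∑ x, τ x = 1)
    (ε : ℝ)
    (π : Equiv.Perm Ω)
    (hπ : ∑ x ∈ Finset.univ.filter
        (fun x => ¬ ((1 - ε) * τ (π x) ≤ μ x ∧ μ x ≤ (1 + ε) * τ (π x))), μ x ≤ ε) :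
    ∃ σ : Equiv.Perm Ω, (1/2) * ∑ x, |μ x - τ (σ x)| ≤ 2 * ε := by
  refine ⟨π, ?_⟩
  have hε : 0 ≤ ε := (sum_nonneg fun x _ => hμ0 x).trans hπ
  have hτπ : ∑ x, τ (π x) = 1 := (Equiv.sum_comp π τ).trans hτ1
  have hpos := sum_posPart_sub_le univ
    (fun x => (1 - ε) * τ (π x) ≤ μ x ∧ μ x ≤ (1 + ε) * τ (π x))
    hε hμ0 (fun x => hτ0 (π x)) (fun _ hx => hx.2)
  rw [hτπ] at hpos
  rw [sum_abs_sub_eq_two_mul_sum_posPart univ (hμ1.trans hτπ.symm)]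
  linarith

/-- For every two distributions μ, τ on a finite set Ω, there is a permutation π with
    d_TV(μ, πτ) ≤ 2·D_H(μ;τ).  Since D_H is the least ε admitting a witnessing
    permutation, we state: for every ε ≥ 0 witnessed by some permutation π
    (i.e. Pr_{x∼μ}[μ(x) ∉ (1±ε)τ(π(x))] ≤ ε), some permutation σ has d_TV ≤ 2ε. -/
theorem dtv_permutation_le_twice_dhist {Ω : Type*} [Fintype Ω] [DecidableEq Ω]
    (μ τ : Ω → ℝ)
    (hμ0 : ∀ x, 0 ≤ μ x) (hμ1 : ∑ x, μ x = 1)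
    (hτ0 : ∀ x, 0 ≤ τ x) (hτ1 : ∑ x, τ x = 1)
    (ε : ℝ) (hε : 0 ≤ ε)
    (π : Equiv.Perm Ω)
    (hπ : ∑ x ∈ Finset.univ.filter
        (fun x => ¬ ((1 - ε) * τ (π x) ≤ μ x ∧ μ x ≤ (1 + ε) * τ (π x))), μ x ≤ ε) :
    ∃ σ : Equiv.Perm Ω, (1/2) * ∑ x, |μ x - τ (σ x)| ≤ 2 * ε :=
  dtv_permutation_le_twice_dhist_general μ τ hμ0 hμ1 hτ0 hτ1 ε π hπ
end

section
/- Let r, r₁, r₂ > 0 with r > r₁ + r₂. Let X₁,…,X_k be i.i.d. non-negative random variables with average X̄ = (1/k)∑X_i, and let Y₁,…,Y_k be random variables satisfying |Y_i| ≤ max{r₁·E[X̄], r₂·X_i} for every i. Then Pr[(1/k)∑(X_i+Y_i) ∉ (1±r)·E[X̄]] ≤ Pr[X̄ ∉ (1±r')·E[X̄]], where r' = (r − r₁ − r₂)/(1 + r₂). -/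
open MeasureTheory ProbabilityTheory Finset

/-!
The statement is an inclusion of events, holding pointwise in `ω`. Since `X ≥ 0` and `m ≥ 0`,
`max (r₁ m) (r₂ Xᵢ) ≤ r₁ m + r₂ Xᵢ`, so averaging bounds the error `Ȳ` by `r₁ m + r₂ X̄`.
If `|X̄ - m| ≤ r' m`, then `X̄ ≤ (1 + r') m` and the triangle inequality gives
`|X̄ + Ȳ - m| ≤ (r' (1 + r₂) + r₁ + r₂) m = r m`.
-/

theorem Set.mem_Icc_one_sub_mul_one_add_mul_iff {x m r : ℝ} :
    x ∈ Set.Icc ((1 - r) * m) ((1 + r) * m) ↔ |x - m| ≤ r * m := by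
  rw [abs_sub_comm, Set.mem_Icc_iff_abs_le, sub_mul, add_mul, one_mul]

theorem abs_sum_le_card_mul_add_sum {ι : Type*} {s : Finset ι} {f g : ι → ℝ} {c : ℝ}
    (hc : 0 ≤ c) (hg : ∀ i ∈ s, 0 ≤ g i) (hf : ∀ i ∈ s, |f i| ≤ max c (g i)) :
    |∑ i ∈ s, f i| ≤ #s * c + ∑ i ∈ s, g i :=
  calc |∑ i ∈ s, f i| ≤ ∑ i ∈ s, |f i| := abs_sum_le_sum_abs _ _
    _ ≤ ∑ i ∈ s, (c + g i) :=
      sum_le_sum fun i hi => (hf i hi).trans (max_le_add_of_nonneg hc (hg i hi))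
    _ = #s * c + ∑ i ∈ s, g i := by rw [sum_add_distrib, sum_const, nsmul_eq_mul]

theorem abs_sum_div_card_le {ι : Type*} {s : Finset ι} {f g : ι → ℝ} {c : ℝ}
    (hc : 0 ≤ c) (hg : ∀ i ∈ s, 0 ≤ g i) (hf : ∀ i ∈ s, |f i| ≤ max c (g i)) :
    |(∑ i ∈ s, f i) / #s| ≤ c + (∑ i ∈ s, g i) / #s := by
  rcases s.eq_empty_or_nonempty with rfl | hs
  · simpa using hc
  have hn : (0 : ℝ) < #s := by exact_mod_cast hs.card_pos
  rw [abs_div, Nat.abs_cast, div_le_iff₀ hn, add_mul, div_mul_cancel₀ _ hn.ne', mul_comm c]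
  exact abs_sum_le_card_mul_add_sum hc hg hf

theorem abs_add_sub_le_of_abs_sub_le {a e m r₁ r₂ ρ : ℝ} (hr₂ : 0 ≤ r₂)
    (ha : |a - m| ≤ ρ * m) (he : |e| ≤ r₁ * m + r₂ * a) :
    |a + e - m| ≤ (ρ * (1 + r₂) + r₁ + r₂) * m := by
  have ha_le : a ≤ (1 + ρ) * m := by linarith [le_abs_self (a - m)]
  calc |a + e - m| = |(a - m) + e| := by ring_nf
    _ ≤ |a - m| + |e| := abs_add_le _ _
    _ ≤ ρ * m + (r₁ * m + r₂ * ((1 + ρ) * m)) := by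
      gcongr
      exact he.trans (by gcongr)
    _ = (ρ * (1 + r₂) + r₁ + r₂) * m := by ring

theorem affine_error_propagation_general {Θ : Type*} [MeasurableSpace Θ]
    (P : Measure Θ)
    (k : ℕ) (X Y : Fin k → Θ → ℝ)
    (hX0 : ∀ i ω, 0 ≤ X i ω)
    (r r₁ r₂ : ℝ) (hr₁ : 0 < r₁) (hr₂ : 0 < r₂)
    (m : ℝ) (hm : m = ∫ ω, (∑ i, X i ω) / k ∂P)
    (hY : ∀ i ω, |Y i ω| ≤ max (r₁ * m) (r₂ * X i ω)) :
    P {ω | (∑ i, (X i ω + Y i ω)) / k ∉ Set.Icc ((1 - r) * m) ((1 + r) * m)}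
      ≤ P {ω | (∑ i, X i ω) / k ∉
          Set.Icc ((1 - (r - r₁ - r₂) / (1 + r₂)) * m)
                  ((1 + (r - r₁ - r₂) / (1 + r₂)) * m)} := by
  have hm0 : 0 ≤ m := hm ▸ integral_nonneg fun ω =>
    div_nonneg (sum_nonneg fun i _ => hX0 i ω) k.cast_nonneg
  have hr : (r - r₁ - r₂) / (1 + r₂) * (1 + r₂) + r₁ + r₂ = r := by
    rw [div_mul_cancel₀ _ (by positivity)]; ring
  refine measure_mono fun ω hω hX => hω ?_
  simp only [Set.mem_Icc_one_sub_mul_one_add_mul_iff] at hX ⊢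
  have hYavg : |(∑ i, Y i ω) / k| ≤ r₁ * m + r₂ * ((∑ i, X i ω) / k) := by
    have := abs_sum_div_card_le (s := univ) (f := fun i => Y i ω) (mul_nonneg hr₁.le hm0)
      (fun i _ => mul_nonneg hr₂.le (hX0 i ω)) (fun i _ => hY i ω)
    rwa [card_univ, Fintype.card_fin, ← mul_sum, mul_div_assoc] at this
  rw [sum_add_distrib, add_div, ← hr]
  exact abs_add_sub_le_of_abs_sub_le hr₂.le hX hYavg

/-- Error-propagation bound: if X₁,…,X_k are i.i.d. non-negative,
    |Y_i| ≤ max{r₁ E[X̄], r₂ X_i}, and r > r₁ + r₂, then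
    Pr[(1/k)∑(X_i+Y_i) ∉ (1±r)E[X̄]] ≤ Pr[X̄ ∉ (1±r')E[X̄]] with
    r' = (r − r₁ − r₂)/(1 + r₂). -/
theorem affine_error_propagation {Θ : Type*} [MeasurableSpace Θ]
    (P : Measure Θ) [IsProbabilityMeasure P]
    (k : ℕ) (hk : 0 < k) (X Y : Fin k → Θ → ℝ)
    (hmeas : ∀ i, Measurable (X i))
    (hindep : iIndepFun X P)
    (hident : ∀ i j, IdentDistrib (X i) (X j) P P)
    (hX0 : ∀ i ω, 0 ≤ X i ω)
    (r r₁ r₂ : ℝ) (hr₁ : 0 < r₁) (hr₂ : 0 < r₂) (hr : r₁ + r₂ < r)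
    (m : ℝ) (hm : m = ∫ ω, (∑ i, X i ω) / k ∂P)
    (hY : ∀ i ω, |Y i ω| ≤ max (r₁ * m) (r₂ * X i ω)) :
    P {ω | (∑ i, (X i ω + Y i ω)) / k ∉ Set.Icc ((1 - r) * m) ((1 + r) * m)}
      ≤ P {ω | (∑ i, X i ω) / k ∉
          Set.Icc ((1 - (r - r₁ - r₂) / (1 + r₂)) * m)
                  ((1 + (r - r₁ - r₂) / (1 + r₂)) * m)} :=
  affine_error_propagation_general P k X Y hX0 r r₁ r₂ hr₁ hr₂ m hm hY
end

section
/- Consider the integer random walk X₁ = k, and at each step i a bit B_i ∈ {0,1} is chosen with Pr[B_i = 1 | history] ≥ 1 − 3/100; if B_i = 1 then X_{i+1} = max{0, X_i − 1}, and if B_i = 0 then X_{i+1} is any integer with 0 ≤ X_{i+1} ≤ X_i + 1. If n ≥ 20k + 1, then Pr[X_n = 0] ≥ 2/3. -/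
/-!
While the walk stays positive, a `true` bit lowers it by exactly one and a `false` bit raises it
by at most one. So if `X n ≠ 0`, many bits were `false`: at least `(n - k) / 2` of the bits
`1, …, n - 1` if the walk never visited `0`, and at least `d / 2 + 1` of the last `d` bits if it
was last at `0` at time `n - d`. Splitting over histories, a fixed set of `s` bits is all `false`
with probability at most `(3/100)^s`, so `z` false bits among `l` have probability at most
`C(l, z) (3/100)^z ≤ 2^(l - 5z)`. The union bound over these events gives
`P[X n ≠ 0] ≤ 1/16 + 1/4 < 1/3`.
-/

open MeasureTheory Finset
open scoped ENNReal

def falseCount (β : ℕ → Bool) (I : Finset ℕ) : ℕ := (I.filter fun j => β j = false).card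

section Walk

variable {x : ℕ → ℕ} {β : ℕ → Bool}

theorem add_sub_le_add_two_mul_falseCount
    (h1 : ∀ i, 1 ≤ i → β i = true → x (i + 1) = x i - 1)
    (h0 : ∀ i, 1 ≤ i → β i = false → x (i + 1) ≤ x i + 1)
    {a b : ℕ} (ha : 1 ≤ a) (hab : a ≤ b) (hpos : ∀ j, a < j → j ≤ b → x j ≠ 0) :
    x b + (b - a) ≤ x a + 2 * falseCount β (Ico a b) := by
  induction b, hab using Nat.le_induction with
  | base => simp
  | succ b hab ih =>
    have hb := ih fun j hj hjb => hpos j hj (by omega)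
    -- `x (b + 1) ≠ 0` keeps the truncated subtraction of a `true` step from saturating
    have hpos' := hpos (b + 1) (by omega) le_rfl
    rw [falseCount, card_filter, sum_Ico_succ_top hab, ← card_filter, ← falseCount]
    cases hB : β b
    · have := h0 b (by omega) hB
      simp only [if_pos]
      omega
    · have := h1 b (by omega) hB
      simp only [Bool.true_eq_false, if_false]
      omega

theorem le_falseCount_of_ne_zero
    (h1 : ∀ i, 1 ≤ i → β i = true → x (i + 1) = x i - 1)
    (h0 : ∀ i, 1 ≤ i → β i = false → x (i + 1) ≤ x i + 1)
    {n : ℕ} (hn : 1 ≤ n) (hx : x n ≠ 0) :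
    (n - x 1 + 1) / 2 ≤ falseCount β (Ico 1 n) ∨
      ∃ d ∈ Ico 1 n, d / 2 + 1 ≤ falseCount β (Ico (n - d) n) := by
  by_cases hzero : ∃ m ≤ n, 1 ≤ m ∧ x m = 0
  · right
    obtain ⟨m, hmn, hm⟩ := hzero
    set M := Nat.findGreatest (fun m => 1 ≤ m ∧ x m = 0) n
    have hM : 1 ≤ M ∧ x M = 0 := Nat.findGreatest_spec (P := fun m => 1 ≤ m ∧ x m = 0) hmn hm
    have hMn : M < n := (Nat.findGreatest_le n).lt_of_ne fun h => hx (h ▸ hM.2)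
    have hlast : ∀ j, M < j → j ≤ n → x j ≠ 0 := fun j hMj hjn hj =>
      Nat.findGreatest_is_greatest hMj hjn ⟨by omega, hj⟩
    have := add_sub_le_add_two_mul_falseCount h1 h0 hM.1 hMn.le hlast
    refine ⟨n - M, mem_Ico.2 ⟨by omega, by omega⟩, ?_⟩
    rw [Nat.sub_sub_self hMn.le]
    omega
  · left
    push Not at hzero
    have := add_sub_le_add_two_mul_falseCount h1 h0 le_rfl hn
      fun j hj hjn => hzero j hjn (by omega)
    omega

end Walk

section Bits

variable {Θ : Type*} {B : ℕ → Θ → Bool}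

def bitCylinder (B : ℕ → Θ → Bool) (i : ℕ) (h : ℕ → Bool) : Set Θ :=
  {ω | ∀ j, 1 ≤ j → j < i → B j ω = h j}

-- Bit `0` is not part of the history: the cylinders above do not constrain it.
def history (B : ℕ → Θ → Bool) (i : ℕ) (ω : Θ) : Ico 1 i → Bool := fun j => B j ω

theorem history_preimage_singleton (i : ℕ) (v : Ico 1 i → Bool) :
    history B i ⁻¹' {v} =
      bitCylinder B i fun j => if hj : j ∈ Ico 1 i then v ⟨j, hj⟩ else false := by
  ext ω
  simp only [Set.mem_preimage, Set.mem_singleton_iff, funext_iff, Subtype.forall, history,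
    bitCylinder, Set.mem_ofPred_eq, mem_Ico]
  exact forall_congr' fun j => ⟨fun h hj hji => by rw [dif_pos ⟨hj, hji⟩, h ⟨hj, hji⟩],
    fun h hj => by rw [h hj.1 hj.2, dif_pos hj]⟩

theorem setOf_forall_false_eq_history_preimage {i : ℕ} {S : Finset ℕ}
    (hS : ∀ j ∈ S, 1 ≤ j ∧ j < i) :
    {ω | ∀ j ∈ S, B j ω = false} =
      history B i ⁻¹' {v | ∀ j : Ico 1 i, (j : ℕ) ∈ S → v j = false} := by
  ext ω
  simp only [Set.mem_ofPred_eq, Set.mem_preimage, history, Subtype.forall, mem_Ico]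
  exact ⟨fun h j _ hj => h j hj, fun h j hj => h j (hS j hj) hj⟩

variable [MeasurableSpace Θ] {P : Measure Θ} {p : ℝ≥0∞}

def TrueWithCondProbGE (P : Measure Θ) (B : ℕ → Θ → Bool) (p : ℝ≥0∞) : Prop :=
  ∀ i, 1 ≤ i → ∀ h : ℕ → Bool,
    p * P (bitCylinder B i h) ≤ P ({ω | B i ω = true} ∩ bitCylinder B i h)

theorem measurable_history (hmB : ∀ i, Measurable (B i)) (i : ℕ) :
    Measurable (history B i) :=
  measurable_pi_lambda _ fun j => hmB j

theorem measure_compl_inter_le_of_mul_le [IsFiniteMeasure P] {s t : Set Θ}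
    (hs : MeasurableSet s) (h : p * P t ≤ P (s ∩ t)) : P (sᶜ ∩ t) ≤ (1 - p) * P t := by
  have hsplit : P (sᶜ ∩ t) = P t - P (s ∩ t) := by
    rw [← measure_inter_add_sdiff t hs, Set.inter_comm t, ENNReal.add_sub_cancel_left
      (measure_ne_top _ _), Set.sdiff_eq, Set.inter_comm]
  rw [hsplit, ENNReal.sub_mul fun _ _ => measure_ne_top _ _, one_mul]
  exact tsub_le_tsub_left h _

theorem measure_false_inter_history_preimage_le [IsFiniteMeasure P]
    (hmB : ∀ i, Measurable (B i)) (hB : TrueWithCondProbGE P B p) {i : ℕ} (hi : 1 ≤ i)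
    (T : Set (Ico 1 i → Bool)) :
    P ({ω | B i ω = false} ∩ history B i ⁻¹' T) ≤ (1 - p) * P (history B i ⁻¹' T) := by
  classical
  have hfib : ∀ v, MeasurableSet (history B i ⁻¹' {v}) := fun v =>
    measurable_history hmB i (measurableSet_singleton v)
  have hfalse : MeasurableSet {ω | B i ω = false} := hmB i (measurableSet_singleton false)
  rw [Set.inter_comm, ← Measure.restrict_apply' hfalse, ← T.coe_toFinset,
    ← sum_measure_preimage_singleton _ fun v _ => hfib v,
    ← sum_measure_preimage_singleton _ fun v _ => hfib v, mul_sum]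
  refine sum_le_sum fun v _ => ?_
  rw [Measure.restrict_apply' hfalse, Set.inter_comm, history_preimage_singleton]
  have hcompl : {ω | B i ω = true}ᶜ = {ω | B i ω = false} := by ext; simp
  rw [← hcompl]
  exact measure_compl_inter_le_of_mul_le (hmB i (measurableSet_singleton true)) (hB i hi _)

theorem measure_forall_false_le [IsProbabilityMeasure P] (hmB : ∀ i, Measurable (B i))
    (hB : TrueWithCondProbGE P B p) (S : Finset ℕ) (hS : ∀ j ∈ S, 1 ≤ j) :
    P {ω | ∀ j ∈ S, B j ω = false} ≤ (1 - p) ^ S.card := by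
  induction S using Finset.induction_on_max with
  | empty => simp
  | insert a S hlt ih =>
    have ha : 1 ≤ a := hS a (mem_insert_self a S)
    have hS' : ∀ j ∈ S, 1 ≤ j ∧ j < a := fun j hj => ⟨hS j (mem_insert_of_mem hj), hlt j hj⟩
    have hsplit : {ω | ∀ j ∈ insert a S, B j ω = false} =
        {ω | B a ω = false} ∩ {ω | ∀ j ∈ S, B j ω = false} := by
      ext ω; simp
    rw [hsplit, card_insert_of_notMem fun h => (hlt a h).false, pow_succ',
      setOf_forall_false_eq_history_preimage hS']
    calc _ ≤ (1 - p) * P (history B a ⁻¹' {v | ∀ j : Ico 1 a, (j : ℕ) ∈ S → v j = false}) :=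
          measure_false_inter_history_preimage_le hmB hB ha _
      _ ≤ (1 - p) * (1 - p) ^ S.card := by
          rw [← setOf_forall_false_eq_history_preimage hS']
          gcongr
          exact ih fun j hj => (hS' j hj).1

theorem measure_le_falseCount_le_choose_mul_pow [IsProbabilityMeasure P]
    (hmB : ∀ i, Measurable (B i)) (hB : TrueWithCondProbGE P B p) (I : Finset ℕ)
    (hI : ∀ j ∈ I, 1 ≤ j) (z : ℕ) :
    P {ω | z ≤ falseCount (B · ω) I} ≤ I.card.choose z * (1 - p) ^ z := by
  have hcover : {ω | z ≤ falseCount (B · ω) I} ⊆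
      ⋃ S ∈ I.powersetCard z, {ω | ∀ j ∈ S, B j ω = false} := by
    intro ω hω
    obtain ⟨S, hS, hScard⟩ := exists_subset_card_eq hω
    exact Set.mem_biUnion (mem_powersetCard.2 ⟨hS.trans (filter_subset _ _), hScard⟩)
      fun j hj => (mem_filter.1 (hS hj)).2
  calc _ ≤ ∑ S ∈ I.powersetCard z, P {ω | ∀ j ∈ S, B j ω = false} :=
        (measure_mono hcover).trans (measure_biUnion_finset_le _ _)
    _ ≤ ∑ S ∈ I.powersetCard z, (1 - p) ^ z := by
        refine sum_le_sum fun S hS => ?_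
        obtain ⟨hSI, hScard⟩ := mem_powersetCard.1 hS
        exact hScard ▸ measure_forall_false_le hmB hB S fun j hj => hI j (hSI hj)
    _ = I.card.choose z * (1 - p) ^ z := by
        rw [sum_const, card_powersetCard, nsmul_eq_mul]

theorem measure_le_falseCount_le_inv_two_pow [IsProbabilityMeasure P]
    (hmB : ∀ i, Measurable (B i)) (hB : TrueWithCondProbGE P B p) {r : ℕ}
    (hp : 1 - p ≤ 2⁻¹ ^ r) (I : Finset ℕ) (hI : ∀ j ∈ I, 1 ≤ j) {z : ℕ}
    (hz : I.card ≤ r * z) :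
    P {ω | z ≤ falseCount (B · ω) I} ≤ 2⁻¹ ^ (r * z - I.card) := by
  calc _ ≤ I.card.choose z * (1 - p) ^ z :=
        measure_le_falseCount_le_choose_mul_pow hmB hB I hI z
    _ ≤ 2 ^ I.card * (2⁻¹ ^ r) ^ z := by
        gcongr
        exact_mod_cast Nat.choose_le_two_pow _ _
    _ = 2⁻¹ ^ (r * z - I.card) := by
        rw [← pow_mul, ← Nat.sub_add_cancel hz, pow_add, Nat.add_sub_cancel, mul_left_comm,
          ← mul_pow, ENNReal.mul_inv_cancel two_ne_zero ENNReal.ofNat_ne_top, one_pow, mul_one]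

end Bits

theorem sum_Ico_inv_two_pow_add_three_le (n : ℕ) :
    ∑ d ∈ Ico 1 n, (2⁻¹ : ℝ≥0∞) ^ (d + 3) ≤ 2⁻¹ ^ 2 :=
  calc _ ≤ ∑' d, (2⁻¹ : ℝ≥0∞) ^ (d + 3) := ENNReal.sum_le_tsum _
    _ = 2⁻¹ ^ 2 := by
        simp only [pow_add, ENNReal.tsum_mul_right, ENNReal.tsum_geometric,
          ENNReal.one_sub_inv_two, inv_inv]
        rw [pow_succ' _ 2, ← mul_assoc, ENNReal.mul_inv_cancel two_ne_zero ENNReal.ofNat_ne_top,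
          one_mul]

theorem linear_random_walk_general {Θ : Type*} [MeasurableSpace Θ]
    (P : Measure Θ) [IsProbabilityMeasure P]
    (k n : ℕ) (B : ℕ → Θ → Bool) (X : ℕ → Θ → ℕ)
    (hmB : ∀ i, Measurable (B i))
    (hX1 : ∀ ω, X 1 ω = k)
    (hcond : ∀ i, 1 ≤ i → ∀ h : ℕ → Bool,
      (97/100 : ℝ≥0∞) * P {ω | ∀ j, 1 ≤ j → j < i → B j ω = h j}
        ≤ P ({ω | B i ω = true} ∩ {ω | ∀ j, 1 ≤ j → j < i → B j ω = h j}))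
    (hstep1 : ∀ i ω, 1 ≤ i → B i ω = true → X (i + 1) ω = X i ω - 1)
    (hstep0 : ∀ i ω, 1 ≤ i → B i ω = false → X (i + 1) ω ≤ X i ω + 1)
    (hn : 20 * k + 1 ≤ n) :
    (2/3 : ℝ≥0∞) ≤ P {ω | X n ω = 0} := by
  have hp : 1 - 97 / 100 ≤ (2⁻¹ : ℝ≥0∞) ^ 5 := by
    rw [tsub_le_iff_right, ← ENNReal.toReal_le_toReal (by finiteness) (by finiteness),
      ENNReal.toReal_add (by finiteness) (by finiteness)]
    norm_num
  have htail := measure_le_falseCount_le_inv_two_pow hmB hcond hp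
  have hcover : {ω | X n ω = 0}ᶜ ⊆ {ω | (n - k + 1) / 2 ≤ falseCount (B · ω) (Ico 1 n)} ∪
      ⋃ d ∈ Ico 1 n, {ω | d / 2 + 1 ≤ falseCount (B · ω) (Ico (n - d) n)} := fun ω hω => by
    simpa [hX1] using le_falseCount_of_ne_zero (x := (X · ω)) (β := (B · ω))
      (hstep1 · ω) (hstep0 · ω) (n := n) (by omega) hω
  have hfail : P {ω | X n ω = 0}ᶜ ≤ 2⁻¹ ^ 4 + 2⁻¹ ^ 2 := by
    refine (measure_mono hcover).trans <| (measure_union_le _ _).trans <| add_le_add ?_ ?_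
    · refine (htail _ (fun j hj => (mem_Ico.1 hj).1) (by simp; omega)).trans ?_
      exact pow_le_pow_right_of_le_one' (by norm_num) (by simp; omega)
    · refine (measure_biUnion_finset_le _ _).trans <| (sum_le_sum fun d hd => ?_).trans
        (sum_Ico_inv_two_pow_add_three_le n)
      have hd := mem_Ico.1 hd
      refine (htail _ (fun j hj => by have := (mem_Ico.1 hj).1; omega) (by simp; omega)).trans ?_
      exact pow_le_pow_right_of_le_one' (by norm_num) (by simp; omega)
  calc (2/3 : ℝ≥0∞) ≤ 1 - (2⁻¹ ^ 4 + 2⁻¹ ^ 2) := by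
        refine ENNReal.le_sub_of_add_le_right (by finiteness) ?_
        rw [← ENNReal.toReal_le_toReal (by finiteness) (by finiteness),
          ENNReal.toReal_add (by finiteness) (by finiteness),
          ENNReal.toReal_add (by finiteness) (by finiteness)]
        norm_num
    _ ≤ P Set.univ - P {ω | X n ω = 0}ᶜ := by rw [measure_univ]; gcongr
    _ ≤ P {ω | X n ω = 0} := le_measure_sdiff.trans_eq (by simp)

/-- Linear random walk: X₁ = k; at each step i ≥ 1 a bit B_i is drawn with
    Pr[B_i = 1 | any history of B₁,…,B_{i−1}] ≥ 97/100; if B_i = 1 then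
    X_{i+1} = max{0, X_i − 1} (ℕ-subtraction), and if B_i = 0 then
    X_{i+1} ≤ X_i + 1.  If n ≥ 20k + 1 then Pr[X_n = 0] ≥ 2/3. -/
theorem linear_random_walk {Θ : Type*} [MeasurableSpace Θ]
    (P : Measure Θ) [IsProbabilityMeasure P]
    (k n : ℕ) (B : ℕ → Θ → Bool) (X : ℕ → Θ → ℕ)
    (hmB : ∀ i, Measurable (B i)) (hmX : ∀ i, Measurable (X i))
    (hX1 : ∀ ω, X 1 ω = k)
    (hcond : ∀ i, 1 ≤ i → ∀ h : ℕ → Bool,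
      (97/100 : ℝ≥0∞) * P {ω | ∀ j, 1 ≤ j → j < i → B j ω = h j}
        ≤ P ({ω | B i ω = true} ∩ {ω | ∀ j, 1 ≤ j → j < i → B j ω = h j}))
    (hstep1 : ∀ i ω, 1 ≤ i → B i ω = true → X (i + 1) ω = X i ω - 1)
    (hstep0 : ∀ i ω, 1 ≤ i → B i ω = false → X (i + 1) ω ≤ X i ω + 1)
    (hn : 20 * k + 1 ≤ n) :
    (2/3 : ℝ≥0∞) ≤ P {ω | X n ω = 0} :=
  linear_random_walk_general P k n B X hmB hX1 hcond hstep1 hstep0 hn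
end

section
/- Let μ and τ be distributions over a finite set Ω and c ∈ [0,1]. Let f_μ and f_τ be c-truncated functions for μ and τ respectively. Then d_TV(μ,τ) = (1/2)·(E_{x∼μ}[max{0, 1 − f_τ(x)/μ(x)}] + E_{x∼τ}[max{0, 1 − f_μ(x)/τ(x)}]) ± 2c, i.e., the difference between d_TV(μ,τ) and this half-sum of expectations has absolute value at most 2c. -/
/-!
Write `(a)₊ = max 0 a`. Since `|μ - τ| = (μ - τ)₊ + (τ - μ)₊`, it suffices to compare
`∑ x, μ x * max 0 (1 - fτ x / μ x)` with `∑ x, (μ x - τ x)₊`, and symmetrically. Where `fτ x = τ x`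
the two summands agree. Where `fτ x = 0` the summand is `μ x`, which exceeds `(μ x - τ x)₊` by at
most `τ x`; this only happens where `CDF_τ x < c`, and these points carry `τ`-mass at most `c`: all of
them are no heavier than the heaviest one among them, whose CDF is already below `c`.
-/

open Finset

lemma abs_sub_eq_max_zero_sub_add_max_zero_sub {α : Type*} [AddCommGroup α] [LinearOrder α]
    [IsOrderedAddMonoid α] (a b : α) : |a - b| = max 0 (a - b) + max 0 (b - a) := by
  rcases le_total a b with h | h
  · rw [abs_of_nonpos (sub_nonpos.2 h), max_eq_left (sub_nonpos.2 h),
      max_eq_right (sub_nonneg.2 h), zero_add, neg_sub]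
  · rw [abs_of_nonneg (sub_nonneg.2 h), max_eq_right (sub_nonneg.2 h),
      max_eq_left (sub_nonpos.2 h), add_zero]

lemma mul_max_zero_one_sub_div {a b : ℝ} (ha : 0 ≤ a) (hb : 0 ≤ b) :
    a * max 0 (1 - b / a) = max 0 (a - b) := by
  rcases ha.eq_or_lt with rfl | ha
  · rw [zero_mul, zero_sub, max_eq_left (neg_nonpos.2 hb)]
  · rw [mul_max_of_nonneg _ _ ha.le, mul_zero, mul_sub, mul_one, mul_div_cancel₀ _ ha.ne']

section Truncation

variable {Ω : Type*} [Fintype Ω]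

/-- The `CDF_ν x` of the paper. -/
noncomputable def massBelow (ν : Ω → ℝ) (x : Ω) : ℝ :=
  ∑ y ∈ univ.filter (fun y => ν y ≤ ν x), ν y

def IsCDFTruncation (ν : Ω → ℝ) (c : ℝ) (f : Ω → ℝ) : Prop :=
  ∀ x, (c ≤ massBelow ν x → f x = ν x) ∧ (massBelow ν x < c → f x = 0 ∨ f x = ν x)

lemma sum_filter_massBelow_lt_le {ν : Ω → ℝ} (hν : ∀ x, 0 ≤ ν x) {c : ℝ} (hc : 0 ≤ c) :
    ∑ x ∈ univ.filter (fun x => massBelow ν x < c), ν x ≤ c := by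
  set S := univ.filter (fun x => massBelow ν x < c)
  rcases S.eq_empty_or_nonempty with hS | hS
  · rwa [hS, sum_empty]
  obtain ⟨x, hxS, hx_max⟩ := S.exists_max_image ν hS
  have hS_sub : S ⊆ univ.filter (fun y => ν y ≤ ν x) := fun y hy =>
    mem_filter.2 ⟨mem_univ y, hx_max y hy⟩
  calc ∑ y ∈ S, ν y ≤ massBelow ν x := sum_le_sum_of_subset_of_nonneg hS_sub fun y _ _ => hν y
    _ ≤ c := (mem_filter.1 hxS).2.le

lemma IsCDFTruncation.eq_or_eq_zero {ν : Ω → ℝ} {c : ℝ} {f : Ω → ℝ} (hf : IsCDFTruncation ν c f)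
    (x : Ω) : f x = ν x ∨ (f x = 0 ∧ massBelow ν x < c) := by
  by_cases hx : massBelow ν x < c
  · exact ((hf x).2 hx).elim (fun h => Or.inr ⟨h, hx⟩) Or.inl
  · exact Or.inl ((hf x).1 (not_lt.1 hx))

lemma IsCDFTruncation.sum_excess_bounds {ν ρ f : Ω → ℝ} {c : ℝ} (hν : ∀ x, 0 ≤ ν x)
    (hρ : ∀ x, 0 ≤ ρ x) (hc : 0 ≤ c) (hf : IsCDFTruncation ρ c f) :
    ∑ x, max 0 (ν x - ρ x) ≤ ∑ x, ν x * max 0 (1 - f x / ν x) ∧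
      ∑ x, ν x * max 0 (1 - f x / ν x) ≤ ∑ x, max 0 (ν x - ρ x) + c := by
  have hterm : ∀ x, max 0 (ν x - ρ x) ≤ ν x * max 0 (1 - f x / ν x) ∧
      ν x * max 0 (1 - f x / ν x) ≤
        max 0 (ν x - ρ x) + if massBelow ρ x < c then ρ x else 0 := by
    intro x
    rcases hf.eq_or_eq_zero x with hfx | ⟨hfx, hx⟩
    · rw [hfx, mul_max_zero_one_sub_div (hν x) (hρ x)]
      split_ifs <;> constructor <;> linarith [hρ x]
    · have hνx : ν x * max 0 (1 - f x / ν x) = ν x := by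
        rw [hfx, zero_div, sub_zero, max_eq_right zero_le_one, mul_one]
      rw [hνx, if_pos hx]
      exact ⟨max_le (hν x) (by linarith [hρ x]), by linarith [le_max_right 0 (ν x - ρ x)]⟩
  refine ⟨sum_le_sum fun x _ => (hterm x).1, ?_⟩
  calc ∑ x, ν x * max 0 (1 - f x / ν x)
      ≤ ∑ x, (max 0 (ν x - ρ x) + if massBelow ρ x < c then ρ x else 0) :=
        sum_le_sum fun x _ => (hterm x).2
    _ = ∑ x, max 0 (ν x - ρ x) + ∑ x ∈ univ.filter (fun x => massBelow ρ x < c), ρ x := by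
        rw [sum_add_distrib, sum_filter]
    _ ≤ ∑ x, max 0 (ν x - ρ x) + c := by
        gcongr
        exact sum_filter_massBelow_lt_le hρ hc

end Truncation

theorem dtv_via_truncated_functions_general {Ω : Type*} [Fintype Ω] (μ τ : Ω → ℝ)
    (c : ℝ) (hc : c ∈ Set.Icc (0:ℝ) 1)
    (hμ0 : ∀ x, 0 ≤ μ x)
    (hτ0 : ∀ x, 0 ≤ τ x)
    (fμ fτ : Ω → ℝ)
    (hfμ : ∀ x,
      (c ≤ ∑ y ∈ Finset.univ.filter (fun y => μ y ≤ μ x), μ y → fμ x = μ x)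
      ∧ ((∑ y ∈ Finset.univ.filter (fun y => μ y ≤ μ x), μ y) < c →
          fμ x = 0 ∨ fμ x = μ x))
    (hfτ : ∀ x,
      (c ≤ ∑ y ∈ Finset.univ.filter (fun y => τ y ≤ τ x), τ y → fτ x = τ x)
      ∧ ((∑ y ∈ Finset.univ.filter (fun y => τ y ≤ τ x), τ y) < c →
          fτ x = 0 ∨ fτ x = τ x)) :
    |(1/2) * ∑ x, |μ x - τ x|
      - (1/2) * ((∑ x, μ x * max 0 (1 - fτ x / μ x))
                + (∑ x, τ x * max 0 (1 - fμ x / τ x)))| ≤ 2 * c := by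
  obtain ⟨hμτ_lower, hμτ_upper⟩ :=
    IsCDFTruncation.sum_excess_bounds (f := fτ) hμ0 hτ0 hc.1 hfτ
  obtain ⟨hτμ_lower, hτμ_upper⟩ :=
    IsCDFTruncation.sum_excess_bounds (f := fμ) hτ0 hμ0 hc.1 hfμ
  have hdtv : ∑ x, |μ x - τ x| = ∑ x, max 0 (μ x - τ x) + ∑ x, max 0 (τ x - μ x) := by
    rw [← sum_add_distrib]
    exact sum_congr rfl fun x _ => abs_sub_eq_max_zero_sub_add_max_zero_sub (μ x) (τ x)
  rw [hdtv, abs_le]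
  constructor <;> linarith [hc.1]

/-- For c-truncated functions f_μ, f_τ of distributions μ, τ:
    d_TV(μ,τ) = (1/2)(E_{x∼μ}[max{0,1−f_τ(x)/μ(x)}] + E_{x∼τ}[max{0,1−f_μ(x)/τ(x)}]) ± 2c. -/
theorem dtv_via_truncated_functions {Ω : Type*} [Fintype Ω] (μ τ : Ω → ℝ)
    (c : ℝ) (hc : c ∈ Set.Icc (0:ℝ) 1)
    (hμ0 : ∀ x, 0 ≤ μ x) (hμ1 : ∑ x, μ x = 1)
    (hτ0 : ∀ x, 0 ≤ τ x) (hτ1 : ∑ x, τ x = 1)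
    (fμ fτ : Ω → ℝ)
    (hfμ : ∀ x,
      (c ≤ ∑ y ∈ Finset.univ.filter (fun y => μ y ≤ μ x), μ y → fμ x = μ x)
      ∧ ((∑ y ∈ Finset.univ.filter (fun y => μ y ≤ μ x), μ y) < c →
          fμ x = 0 ∨ fμ x = μ x))
    (hfτ : ∀ x,
      (c ≤ ∑ y ∈ Finset.univ.filter (fun y => τ y ≤ τ x), τ y → fτ x = τ x)
      ∧ ((∑ y ∈ Finset.univ.filter (fun y => τ y ≤ τ x), τ y) < c →
          fτ x = 0 ∨ fτ x = τ x)) :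
    |(1/2) * ∑ x, |μ x - τ x|
      - (1/2) * ((∑ x, μ x * max 0 (1 - fτ x / μ x))
                + (∑ x, τ x * max 0 (1 - fμ x / τ x)))| ≤ 2 * c :=
  dtv_via_truncated_functions_general μ τ c hc hμ0 hτ0 fμ fτ hfμ hfτ
end

section
/- Define N₁ = 1 and N_i = ⌈(1+120ε)N_{i−1}⌉ for i ≥ 2. For every N ≥ 2, 0 < ε < 1/120, and k ≤ ln N/(240ε), we have ∑_{i=1}^{k} N_i < √N·(ln N)/ε². -/
/-!
With `c = 120ε`, the ceiling gives `N (i+1) ≤ (1+c) N i + 1`, so `N i + 1/c` grows at most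
geometrically and `∑_{i ≤ k} N i ≤ (1 + 1/c) (1+c)^k / c ≤ 2 (1+c)^k / c²`. Since
`(1+c)^k ≤ exp (c k) ≤ exp (ln M / 2) = √M`, the sum is below `√M / (7200 ε²)`, and
`ln M ≥ ln 2 > 1/7200`.
-/
open Finset Real

section LinearRecurrence

variable {c : ℝ} {x : ℕ → ℝ}

/-- Shifting by `c⁻¹` turns the recursive inequality into a geometric one. -/
lemma add_inv_le_pow_mul_of_le_mul_add_one (hc : 0 < c)
    (hx : ∀ n, x (n + 1) ≤ (1 + c) * x n + 1) (n : ℕ) :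
    x n + c⁻¹ ≤ (1 + c) ^ n * (x 0 + c⁻¹) := by
  induction n with
  | zero => simp
  | succ n ih =>
    calc x (n + 1) + c⁻¹ ≤ (1 + c) * (x n + c⁻¹) := by
          have : (1 + c) * c⁻¹ = c⁻¹ + 1 := by field_simp
          linarith [hx n]
      _ ≤ (1 + c) * ((1 + c) ^ n * (x 0 + c⁻¹)) := by gcongr
      _ = (1 + c) ^ (n + 1) * (x 0 + c⁻¹) := by ring

lemma sum_range_le_of_le_mul_add_one (hc : 0 < c)
    (hx : ∀ n, x (n + 1) ≤ (1 + c) * x n + 1) (k : ℕ) :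
    ∑ n ∈ range k, x n ≤ (x 0 + c⁻¹) * ((1 + c) ^ k - 1) / c := by
  calc ∑ n ∈ range k, x n ≤ ∑ n ∈ range k, (x 0 + c⁻¹) * (1 + c) ^ n := by
        refine sum_le_sum fun n _ => ?_
        linarith [add_inv_le_pow_mul_of_le_mul_add_one hc hx n, inv_pos.2 hc]
    _ = (x 0 + c⁻¹) * ((1 + c) ^ k - 1) / c := by
        rw [← mul_sum, geom_sum_eq (by linarith), add_sub_cancel_left, mul_div_assoc]

end LinearRecurrence

lemma sqrt_eq_exp_log_div_two {M : ℝ} (hM : 0 < M) : √M = exp (log M / 2) := by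
  rw [sqrt_eq_rpow, rpow_def_of_pos hM, mul_one_div]

lemma one_add_pow_le_sqrt {c M : ℝ} {k : ℕ} (hc : 0 ≤ c) (hM : 0 < M)
    (hk : c * k ≤ log M / 2) : (1 + c) ^ k ≤ √M :=
  calc (1 + c) ^ k ≤ exp c ^ k := by gcongr; linarith [add_one_le_exp c]
    _ = exp (c * k) := by rw [← exp_nat_mul, mul_comm]
    _ ≤ √M := by rw [sqrt_eq_exp_log_div_two hM]; exact exp_le_exp.2 hk

/-- With N₁ = 1 and N_i = ⌈(1+120ε)N_{i−1}⌉, for every M ≥ 2, 0 < ε < 1/120 and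
    k ≤ ln M/(240ε) one has ∑_{i=1}^k N_i < √M·(ln M)/ε². -/
theorem technical_sizes_of_Ai (ε : ℝ) (hε : 0 < ε) (hε' : ε < 1/120)
    (N : ℕ → ℕ) (hN1 : N 1 = 1)
    (hrec : ∀ i, 2 ≤ i → N i = ⌈(1 + 120 * ε) * (N (i - 1) : ℝ)⌉₊)
    (M : ℝ) (hM : 2 ≤ M) (k : ℕ) (hk : (k : ℝ) ≤ Real.log M / (240 * ε)) :
    (∑ i ∈ Finset.Icc 1 k, (N i : ℝ)) < Real.sqrt M * Real.log M / ε ^ 2 := by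
  set c := 120 * ε with hc_def
  have hc : 0 < c := by positivity
  have hstep : ∀ n, (N (n + 1 + 1) : ℝ) ≤ (1 + c) * N (n + 1) + 1 := fun n => by
    rw [hrec (n + 1 + 1) (by omega), Nat.add_sub_cancel]
    exact (Nat.ceil_lt_add_one (by positivity)).le
  have hsum := sum_range_le_of_le_mul_add_one (x := fun n => (N (n + 1) : ℝ)) hc hstep k
  have hpow : (1 + c) ^ k ≤ √M := one_add_pow_le_sqrt hc.le (by linarith) (by
    rw [le_div_iff₀ (by positivity)] at hk; linarith)
  have hlog : 1 / 7200 < log M := by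
    linarith [log_two_gt_d9, log_le_log (by norm_num) hM]
  rw [← Ico_add_one_right_eq_Icc, sum_Ico_eq_sum_range, add_tsub_cancel_right]
  simp only [add_comm 1, hN1, Nat.cast_one] at hsum ⊢
  have hsqrt : 0 < √M := sqrt_pos.2 (by linarith)
  calc _ ≤ (1 + c⁻¹) * ((1 + c) ^ k - 1) / c := hsum
    _ < (1 + c⁻¹) * (1 + c) ^ k / c := by gcongr; linarith
    _ ≤ (1 + c⁻¹) * √M / c := by gcongr
    _ ≤ 2 / c ^ 2 * √M := by
        rw [div_le_iff₀ hc]; field_simp; nlinarith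
    _ = √M * (1 / 7200) / ε ^ 2 := by rw [hc_def]; field_simp; ring
    _ < √M * log M / ε ^ 2 := by gcongr
end

section
/- Let S = (S₁,…,S_k) be a (1+ε)-increasing non-empty k-partition (|S_i| ≥ (1+ε)|S_{i−1}| for 2 ≤ i ≤ k), and let I₁, I₂ ⊆ {1,…,k} both of size exactly k/2 with |I₁ Δ I₂| > k/30. Then for every permutation π of the union Ω = ∪S_i, the total variation distance between the chunk distribution μ_{S,I₁} and the π-pushforward of μ_{S,I₂} is greater than ε/120. -/
/-!
Fix `i ∈ I₁ \ I₂` and `x ∈ S i`. The point `π x` lies in some chunk `S j` with `j ≠ i`: either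
`j ∉ I₂`, so `μ₂ (π x) = 0`, or `j ∈ I₂` and, since chunk sizes grow by a factor `1 + ε` from one
index to the next, `μ₂ (π x)` and `μ₁ x` differ by a factor of at least `1 + ε`. Either way
`|μ₁ x - μ₂ (π x)| ≥ (ε / 2) μ₁ x`. Summing over the chunks indexed by `I₁ \ I₂`, which carry
`μ₁`-mass `|I₁ \ I₂| / |I₁| > 1 / 30`, gives the bound.
-/

open Finset

lemma half_mul_le_abs_sub {ε a b : ℝ} (hε0 : 0 ≤ ε) (hε1 : ε ≤ 1) (ha : 0 ≤ a) (hb : 0 ≤ b)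
    (h : (1 + ε) * a ≤ b ∨ (1 + ε) * b ≤ a) : ε / 2 * a ≤ |a - b| := by
  rcases h with h | h
  · rw [abs_sub_comm, abs_of_nonneg (by nlinarith)]
    nlinarith
  · -- `b ≤ a / (1 + ε) ≤ (1 - ε / 2) a`, the last step because `ε ≤ 1`
    have hb' : (1 + ε / 2 - ε ^ 2 / 2) * b ≤ (1 - ε / 2) * a := by
      nlinarith [mul_le_mul_of_nonneg_left h (by linarith : (0 : ℝ) ≤ 1 - ε / 2)]
    rw [abs_of_nonneg (by nlinarith)]
    nlinarith [mul_nonneg (mul_nonneg hε0 (sub_nonneg.2 hε1)) hb]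

lemma one_add_mul_le_of_lt {f : ℕ → ℝ} {ε : ℝ} {k : ℕ} (hε : 0 ≤ ε) (hf : ∀ i, 0 ≤ f i)
    (hinc : ∀ i, 2 ≤ i → i ≤ k → (1 + ε) * f (i - 1) ≤ f i)
    {i j : ℕ} (hi : 1 ≤ i) (hij : i < j) (hj : j ≤ k) : (1 + ε) * f i ≤ f j := by
  induction j, hij using Nat.le_induction with
  | base => simpa using hinc (i + 1) (by omega) hj
  | succ n hin ih =>
    calc (1 + ε) * f i ≤ f n := ih (by omega)
      _ ≤ (1 + ε) * f n := le_mul_of_one_le_left (hf n) (by linarith)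
      _ ≤ f (n + 1) := by simpa using hinc (n + 1) (by omega) hj

lemma one_add_mul_one_div_le {ε m c d : ℝ} (hε : 0 ≤ ε) (hm : 0 < m) (hd : 0 < d)
    (h : (1 + ε) * d ≤ c) : (1 + ε) * (1 / (m * c)) ≤ 1 / (m * d) := by
  have hc : 0 < c := by nlinarith
  rw [mul_one_div, div_le_div_iff₀ (by positivity) (by positivity)]
  nlinarith

lemma card_symmDiff_eq_two_mul_card_sdiff {β : Type*} [DecidableEq β] {s t : Finset β}
    (h : #s = #t) : #(symmDiff s t) = 2 * #(s \ t) := by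
  rw [Finset.symmDiff_def, card_union_of_disjoint disjoint_sdiff_sdiff]
  have hs := card_sdiff_add_card_inter s t
  have ht := card_sdiff_add_card_inter t s
  rw [inter_comm] at ht
  omega

section Chunks

variable {α : Type*} [DecidableEq α] {k : ℕ} {S : ℕ → Finset α} {I : Finset ℕ} {μ : α → ℝ}

lemma sum_chunk_mass (hdisj : ∀ i ∈ I, ∀ j ∈ I, i ≠ j → Disjoint (S i) (S j))
    (hne : ∀ i ∈ I, (S i).Nonempty)
    (hμ : ∀ i ∈ I, ∀ x ∈ S i, μ x = 1 / ((#I : ℝ) * (#(S i) : ℝ)))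
    {J : Finset ℕ} (hJ : J ⊆ I) : ∑ x ∈ J.biUnion S, μ x = #J / #I := by
  rw [sum_biUnion fun i hi j hj => hdisj i (hJ hi) j (hJ hj), div_eq_mul_one_div,
    ← nsmul_eq_mul, ← sum_const]
  refine sum_congr rfl fun i hi => ?_
  have hS : (#(S i) : ℝ) ≠ 0 := by exact_mod_cast (hne i (hJ hi)).card_ne_zero
  rw [sum_congr rfl (hμ i (hJ hi)), sum_const, nsmul_eq_mul]
  field_simp

lemma chunk_mass_eq_zero_or
    (hdisj : ∀ i ∈ Icc 1 k, ∀ j ∈ Icc 1 k, i ≠ j → Disjoint (S i) (S j))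
    (hI : I ⊆ Icc 1 k) (hμ : ∀ i ∈ I, ∀ x ∈ S i, μ x = 1 / ((#I : ℝ) * (#(S i) : ℝ)))
    (hμ0 : ∀ x, x ∉ I.biUnion S → μ x = 0) {j : ℕ} (hj : j ∈ Icc 1 k) {y : α} (hy : y ∈ S j) :
    μ y = 0 ∨ j ∈ I ∧ μ y = 1 / ((#I : ℝ) * (#(S j) : ℝ)) := by
  by_cases hjI : j ∈ I
  · exact .inr ⟨hjI, hμ j hjI y hy⟩
  refine .inl (hμ0 y fun hyI => ?_)
  obtain ⟨j', hj', hyj'⟩ := mem_biUnion.mp hyI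
  exact disjoint_left.mp (hdisj j' (hI hj') j hj fun h => hjI (h ▸ hj')) hyj' hy

lemma half_mul_le_abs_one_div_sub_chunk_mass {ε : ℝ} (hε0 : 0 ≤ ε) (hε1 : ε ≤ 1)
    (hdisj : ∀ i ∈ Icc 1 k, ∀ j ∈ Icc 1 k, i ≠ j → Disjoint (S i) (S j))
    (hinc : ∀ i, 2 ≤ i → i ≤ k → (1 + ε) * (#(S (i - 1)) : ℝ) ≤ #(S i))
    (hI : I ⊆ Icc 1 k) (hμ : ∀ i ∈ I, ∀ x ∈ S i, μ x = 1 / ((#I : ℝ) * (#(S i) : ℝ)))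
    (hμ0 : ∀ x, x ∉ I.biUnion S → μ x = 0)
    {i : ℕ} (hi : i ∈ Icc 1 k) (hiI : i ∉ I) {x : α} (hx : x ∈ S i)
    {y : α} (hy : y ∈ (Icc 1 k).biUnion S) :
    ε / 2 * (1 / ((#I : ℝ) * #(S i))) ≤ |1 / ((#I : ℝ) * #(S i)) - μ y| := by
  obtain ⟨j, hj, hyj⟩ := mem_biUnion.mp hy
  have hSi : (0 : ℝ) < #(S i) := by exact_mod_cast card_pos.mpr ⟨x, hx⟩
  have hmass : 0 ≤ 1 / ((#I : ℝ) * #(S i)) := by positivity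
  rcases chunk_mass_eq_zero_or hdisj hI hμ hμ0 hj hyj with hy0 | ⟨hjI, hyj'⟩
  · exact half_mul_le_abs_sub hε0 hε1 hmass hy0.ge (.inr (by simpa [hy0] using hmass))
  have hm : (0 : ℝ) < #I := by exact_mod_cast card_pos.mpr ⟨j, hjI⟩
  have hSj : (0 : ℝ) < #(S j) := by exact_mod_cast card_pos.mpr ⟨y, hyj⟩
  have hgap {a b : ℕ} (ha : 1 ≤ a) (hab : a < b) (hb : b ≤ k) : (1 + ε) * #(S a) ≤ (#(S b) : ℝ) :=
    one_add_mul_le_of_lt (f := fun n => (#(S n) : ℝ)) hε0 (fun _ => Nat.cast_nonneg _) hinc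
      ha hab hb
  rw [mem_Icc] at hi hj
  rw [hyj']
  refine half_mul_le_abs_sub hε0 hε1 hmass (by positivity) ?_
  rcases lt_or_gt_of_ne fun h : i = j => hiI (h ▸ hjI) with hij | hji
  · exact .inr (one_add_mul_one_div_le hε0 hm hSi (hgap hi.1 hij hj.2))
  · exact .inl (one_add_mul_one_div_le hε0 hm hSj (hgap hj.1 hji hi.2))

end Chunks

theorem chunk_distributions_far_general {α : Type*} [DecidableEq α]
    (k : ℕ) (ε : ℝ) (hε0 : 0 < ε) (hε1 : ε ≤ 1)
    (S : ℕ → Finset α)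
    (hne : ∀ i ∈ Finset.Icc 1 k, (S i).Nonempty)
    (hdisj : ∀ i ∈ Finset.Icc 1 k, ∀ j ∈ Finset.Icc 1 k, i ≠ j → Disjoint (S i) (S j))
    (hinc : ∀ i, 2 ≤ i → i ≤ k → (1 + ε) * ((S (i - 1)).card : ℝ) ≤ ((S i).card : ℝ))
    (I₁ I₂ : Finset ℕ) (hI₁ : I₁ ⊆ Finset.Icc 1 k) (hI₂ : I₂ ⊆ Finset.Icc 1 k)
    (hc₁ : 2 * I₁.card = k) (hc₂ : 2 * I₂.card = k)
    (hfar : (k : ℝ) < 30 * ((symmDiff I₁ I₂).card : ℝ))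
    (μ₁ μ₂ : α → ℝ)
    (hμ₁ : ∀ i ∈ I₁, ∀ x ∈ S i, μ₁ x = 1 / ((I₁.card : ℝ) * ((S i).card : ℝ)))
    (hμ₂ : ∀ i ∈ I₂, ∀ x ∈ S i, μ₂ x = 1 / ((I₂.card : ℝ) * ((S i).card : ℝ)))
    (hμ₂0 : ∀ x, x ∉ I₂.biUnion S → μ₂ x = 0)
    (π : Equiv.Perm α)
    (hπ : ∀ x ∈ (Finset.Icc 1 k).biUnion S, π x ∈ (Finset.Icc 1 k).biUnion S) :
    ε / 120 < (1/2) * ∑ x ∈ (Finset.Icc 1 k).biUnion S, |μ₁ x - μ₂ (π x)| := by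
  have hcard : #I₁ = #I₂ := by omega
  set D := I₁ \ I₂
  have hmD : (#I₁ : ℝ) < 30 * #D := by
    rw [← hc₁, card_symmDiff_eq_two_mul_card_sdiff hcard] at hfar
    push_cast at hfar
    linarith
  have hm : (0 : ℝ) < #I₁ := by
    have : (#D : ℝ) ≤ #I₁ := by exact_mod_cast card_le_card sdiff_subset
    linarith
  have hDΩ : D.biUnion S ⊆ (Icc 1 k).biUnion S :=
    biUnion_subset_biUnion_of_subset_left _ (sdiff_subset.trans hI₁)
  have hmass : ∑ x ∈ D.biUnion S, μ₁ x = #D / #I₁ :=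
    sum_chunk_mass (fun i hi j hj => hdisj i (hI₁ hi) j (hI₁ hj)) (fun i hi => hne i (hI₁ hi))
      hμ₁ sdiff_subset
  have hpoint : ∀ x ∈ D.biUnion S, ε / 2 * μ₁ x ≤ |μ₁ x - μ₂ (π x)| := by
    intro x hx
    obtain ⟨i, hi, hxi⟩ := mem_biUnion.mp hx
    rw [hμ₁ i (mem_sdiff.mp hi).1 x hxi, hcard]
    exact half_mul_le_abs_one_div_sub_chunk_mass hε0.le hε1 hdisj hinc hI₂ hμ₂ hμ₂0
      (hI₁ (mem_sdiff.mp hi).1) (mem_sdiff.mp hi).2 hxi (hπ x (hDΩ hx))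
  calc ε / 120 < 1 / 2 * (ε / 2 * (#D / #I₁)) := by
        rw [show 1 / 2 * (ε / 2 * (#D / #I₁)) = ε * #D / (4 * #I₁) by ring,
          lt_div_iff₀ (by positivity)]
        nlinarith
    _ = 1 / 2 * ∑ x ∈ D.biUnion S, ε / 2 * μ₁ x := by rw [← mul_sum, hmass]
    _ ≤ 1 / 2 * ∑ x ∈ D.biUnion S, |μ₁ x - μ₂ (π x)| :=
        mul_le_mul_of_nonneg_left (sum_le_sum hpoint) (by norm_num)
    _ ≤ 1 / 2 * ∑ x ∈ (Icc 1 k).biUnion S, |μ₁ x - μ₂ (π x)| :=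
        mul_le_mul_of_nonneg_left
          (sum_le_sum_of_subset_of_nonneg hDΩ fun _ _ _ => abs_nonneg _) (by norm_num)

/-- For a (1+ε)-increasing non-empty k-partition S and I₁, I₂ ⊆ {1,…,k} of size k/2
    with |I₁ Δ I₂| > k/30, every permutation π of Ω = ∪S_i has
    d_TV(μ_{S,I₁}, π·μ_{S,I₂}) > ε/120. -/
theorem chunk_distributions_far {α : Type*} [DecidableEq α]
    (k : ℕ) (ε : ℝ) (hε0 : 0 < ε) (hε1 : ε ≤ 1)
    (S : ℕ → Finset α)
    (hne : ∀ i ∈ Finset.Icc 1 k, (S i).Nonempty)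
    (hdisj : ∀ i ∈ Finset.Icc 1 k, ∀ j ∈ Finset.Icc 1 k, i ≠ j → Disjoint (S i) (S j))
    (hinc : ∀ i, 2 ≤ i → i ≤ k → (1 + ε) * ((S (i - 1)).card : ℝ) ≤ ((S i).card : ℝ))
    (I₁ I₂ : Finset ℕ) (hI₁ : I₁ ⊆ Finset.Icc 1 k) (hI₂ : I₂ ⊆ Finset.Icc 1 k)
    (hc₁ : 2 * I₁.card = k) (hc₂ : 2 * I₂.card = k)
    (hfar : (k : ℝ) < 30 * ((symmDiff I₁ I₂).card : ℝ))
    (μ₁ μ₂ : α → ℝ)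
    (hμ₁ : ∀ i ∈ I₁, ∀ x ∈ S i, μ₁ x = 1 / ((I₁.card : ℝ) * ((S i).card : ℝ)))
    (hμ₁0 : ∀ x, x ∉ I₁.biUnion S → μ₁ x = 0)
    (hμ₂ : ∀ i ∈ I₂, ∀ x ∈ S i, μ₂ x = 1 / ((I₂.card : ℝ) * ((S i).card : ℝ)))
    (hμ₂0 : ∀ x, x ∉ I₂.biUnion S → μ₂ x = 0)
    (π : Equiv.Perm α)
    (hπ : ∀ x ∈ (Finset.Icc 1 k).biUnion S, π x ∈ (Finset.Icc 1 k).biUnion S) :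
    ε / 120 < (1/2) * ∑ x ∈ (Finset.Icc 1 k).biUnion S, |μ₁ x - μ₂ (π x)| :=
  chunk_distributions_far_general k ε hε0 hε1 S hne hdisj hinc I₁ I₂ hI₁ hI₂ hc₁ hc₂ hfar μ₁ μ₂ hμ₁
    hμ₂ hμ₂0 π hπ
end

section
/- Let 𝓘 ⊆ 2^{{1,…,k}} be a q-uniform family: for every J ⊆ {1,…,k} with |J| = q, the intersection J ∩ I for I drawn uniformly from 𝓘 is uniformly distributed over all subsets of J. Then the family 𝓘' = { I ∪ ((2k+1) − ({1,…,k}∖I)) : I ∈ 𝓘 } ⊆ 2^{{1,…,2k}} is a paired q-uniform family: every member is 2k-paired, and for every J ⊆ {1,…,2k} of size q disjoint from (2k+1)−J, the intersection J ∩ I' for I' uniform in 𝓘' is uniform over subsets of J. -/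
open Finset

/-! For `x ∈ {1,…,2k}` write `x̄ = foldHalf k x = min x (2k+1-x) ∈ {1,…,k}` for the member of the pair `{x, 2k+1-x}`
in the lower half. A point `x` lies in the pairing of `I` exactly when `x̄ ∈ I` agrees with `x ≤ k`,
so the pairing is complementary on each pair, and its trace on a set `J` containing no pair is
obtained from the trace of `I` on `J̄ = {x̄ : x ∈ J}`, a `q`-set in `{1,…,k}`, by a bijection of
the powersets. The counts of `q`-uniformity for `J` are therefore those for `J̄`. -/

section Pairing

/-- The paper's `I ∪ ((2k+1) − ¬_k I)`. -/
def pairing (k : ℕ) (I : Finset ℕ) : Finset ℕ :=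
  I ∪ (Icc 1 k \ I).image (fun i => 2 * k + 1 - i)

def foldHalf (k j : ℕ) : ℕ := min j (2 * k + 1 - j)

variable {k : ℕ} {I : Finset ℕ}

theorem mem_pairing (hI : I ⊆ Icc 1 k) {x : ℕ} :
    x ∈ pairing k I ↔ 1 ≤ x ∧ x ≤ 2 * k ∧ (foldHalf k x ∈ I ↔ x ≤ k) := by
  have hIk : ∀ {i}, i ∈ I → 1 ≤ i ∧ i ≤ k := fun hi => mem_Icc.1 (hI hi)
  simp only [pairing, foldHalf, mem_union, mem_image, mem_sdiff, mem_Icc]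
  constructor
  · rintro (hx | ⟨i, ⟨⟨hi1, hik⟩, hiI⟩, rfl⟩)
    · have := hIk hx
      rw [min_eq_left (by omega)]
      exact ⟨this.1, by omega, iff_of_true hx this.2⟩
    · rw [min_eq_right (by omega), show 2 * k + 1 - (2 * k + 1 - i) = i by omega]
      exact ⟨by omega, by omega, iff_of_false hiI (by omega)⟩
  · rintro ⟨hx1, hx2k, hx⟩
    by_cases hxk : x ≤ k
    · rw [min_eq_left (by omega)] at hx
      exact Or.inl (hx.2 hxk)
    · rw [min_eq_right (by omega)] at hx
      exact Or.inr ⟨2 * k + 1 - x, ⟨⟨by omega, by omega⟩, fun h => hxk (hx.1 h)⟩, by omega⟩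

theorem pairing_inter_Icc (hI : I ⊆ Icc 1 k) : pairing k I ∩ Icc 1 k = I := by
  ext x
  rw [mem_inter, mem_pairing hI, mem_Icc]
  constructor
  · rintro ⟨⟨-, -, hx⟩, -, hxk⟩
    rwa [foldHalf, min_eq_left (by omega), iff_true_right hxk] at hx
  · intro hx
    have := mem_Icc.1 (hI hx)
    rw [foldHalf, min_eq_left (by omega)]
    exact ⟨⟨this.1, by omega, iff_of_true hx this.2⟩, this⟩

theorem injOn_pairing : Set.InjOn (pairing k) {I | I ⊆ Icc 1 k} := fun I hI I' hI' h => by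
  rw [← pairing_inter_Icc hI, ← pairing_inter_Icc hI', h]

theorem foldHalf_mirror {x : ℕ} (hx : x ≤ 2 * k + 1) :
    foldHalf k (2 * k + 1 - x) = foldHalf k x := by
  unfold foldHalf
  omega

theorem image_mirror_pairing (hI : I ⊆ Icc 1 k) :
    (pairing k I).image (fun i => 2 * k + 1 - i) = Icc 1 (2 * k) \ pairing k I := by
  ext y
  simp only [mem_image, mem_sdiff, mem_Icc, mem_pairing hI]
  constructor
  · rintro ⟨x, ⟨hx1, hx2k, hx⟩, rfl⟩
    rw [foldHalf_mirror (by omega)]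
    refine ⟨⟨by omega, by omega⟩, fun h => ?_⟩
    grind
  · rintro ⟨⟨hy1, hy2k⟩, hy⟩
    refine ⟨2 * k + 1 - y, ⟨by omega, by omega, ?_⟩, by omega⟩
    rw [foldHalf_mirror (by omega)]
    grind

theorem inter_image_eq_image_filter_iff {α β : Type*} [DecidableEq β] {f : α → β} {J : Finset α}
    (hf : Set.InjOn f J) {I : Finset β} (P : α → Prop) [DecidablePred P] :
    I ∩ J.image f = (J.filter P).image f ↔ ∀ x ∈ J, (f x ∈ I ↔ P x) := by
  have mem_image_filter : ∀ x ∈ J, (f x ∈ (J.filter P).image f ↔ P x) := fun x hx => by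
    simp only [mem_image, mem_filter]
    exact ⟨fun ⟨y, ⟨hy, hPy⟩, hxy⟩ => hf hy hx hxy ▸ hPy, fun hPx => ⟨x, ⟨hx, hPx⟩, rfl⟩⟩
  constructor
  · intro h x hx
    rw [← mem_image_filter x hx, ← h, mem_inter, and_iff_left (mem_image_of_mem f hx)]
  · intro h
    ext y
    constructor
    · intro hy
      obtain ⟨hyI, hyf⟩ := mem_inter.1 hy
      obtain ⟨x, hx, rfl⟩ := mem_image.1 hyf
      exact (mem_image_filter x hx).2 ((h x hx).1 hyI)
    · intro hy
      obtain ⟨x, hx, rfl⟩ := mem_image.1 hy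
      obtain ⟨hxJ, hPx⟩ := mem_filter.1 hx
      exact mem_inter.2 ⟨(h x hxJ).2 hPx, mem_image_of_mem f hxJ⟩

variable {J : Finset ℕ}

theorem injOn_foldHalf (hJ : J ⊆ Icc 1 (2 * k))
    (hdisj : Disjoint J (J.image (fun i => 2 * k + 1 - i))) : Set.InjOn (foldHalf k) J := by
  intro x hx y hy hxy
  have hx' := mem_Icc.1 (hJ hx)
  have hy' := mem_Icc.1 (hJ hy)
  have hpair : y ≠ 2 * k + 1 - x := fun h =>
    disjoint_left.1 hdisj hy (h ▸ mem_image_of_mem _ (Finset.mem_coe.1 hx))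
  unfold foldHalf at hxy
  omega

theorem image_foldHalf_subset (hJ : J ⊆ Icc 1 (2 * k)) : J.image (foldHalf k) ⊆ Icc 1 k := by
  intro y hy
  obtain ⟨x, hx, rfl⟩ := mem_image.1 hy
  have := mem_Icc.1 (hJ hx)
  rw [mem_Icc, foldHalf]
  omega

theorem pairing_inter_eq_iff (hI : I ⊆ Icc 1 k) (hJ : J ⊆ Icc 1 (2 * k))
    (hinj : Set.InjOn (foldHalf k) J) {R : Finset ℕ} (hR : R ⊆ J) :
    pairing k I ∩ J = R ↔
      I ∩ J.image (foldHalf k) = (J.filter (fun x => x ∈ R ↔ x ≤ k)).image (foldHalf k) := by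
  rw [inter_image_eq_image_filter_iff hinj, Finset.ext_iff]
  refine forall_congr' fun x => ?_
  have hxJ : x ∈ J → 1 ≤ x ∧ x ≤ 2 * k := fun h => mem_Icc.1 (hJ h)
  have hxR : x ∈ R → x ∈ J := fun h => hR h
  rw [mem_inter, mem_pairing hI]
  grind

end Pairing

theorem pairing_preserves_q_uniformity_general (k q : ℕ)
    (𝓘 : Finset (Finset ℕ))
    (hsub : ∀ I ∈ 𝓘, I ⊆ Finset.Icc 1 k)
    (hunif : ∀ J ⊆ Finset.Icc 1 k, J.card = q → ∀ I' ⊆ J,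
      (𝓘.filter (fun I => I ∩ J = I')).card * 2 ^ q = 𝓘.card) :
    (∀ I' ∈ 𝓘.image (fun I => I ∪ ((Finset.Icc 1 k \ I).image (fun i => 2 * k + 1 - i))),
        I'.image (fun i => 2 * k + 1 - i) = Finset.Icc 1 (2 * k) \ I')
    ∧ (∀ J ⊆ Finset.Icc 1 (2 * k), J.card = q →
        Disjoint J (J.image (fun i => 2 * k + 1 - i)) → ∀ I' ⊆ J,
        ((𝓘.image (fun I => I ∪ ((Finset.Icc 1 k \ I).image (fun i => 2 * k + 1 - i)))).filter
            (fun I => I ∩ J = I')).card * 2 ^ q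
          = (𝓘.image (fun I => I ∪ ((Finset.Icc 1 k \ I).image
              (fun i => 2 * k + 1 - i)))).card) := by
  have hinj𝓘 : Set.InjOn (pairing k) 𝓘 := injOn_pairing.mono fun I hI => hsub I hI
  refine ⟨fun I' hI' => ?_, fun J hJ hJq hdisj R hR => ?_⟩
  · obtain ⟨I, hI, rfl⟩ := mem_image.1 hI'
    exact image_mirror_pairing (hsub I hI)
  · have hinj := injOn_foldHalf hJ hdisj
    change ((𝓘.image (pairing k)).filter (· ∩ J = R)).card * 2 ^ q = (𝓘.image (pairing k)).card
    rw [filter_image, card_image_of_injOn (hinj𝓘.mono (coe_subset.2 (filter_subset _ _))),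
      card_image_of_injOn hinj𝓘,
      filter_congr fun I hI => pairing_inter_eq_iff (hsub I hI) hJ hinj hR]
    exact hunif _ (image_foldHalf_subset hJ) (by rw [card_image_of_injOn hinj, hJq]) _
      (image_subset_image (filter_subset _ _))

/-- If 𝓘 ⊆ 2^{1..k} is a q-uniform family (for a uniform I ∈ 𝓘 and any J of size q,
    I ∩ J is uniform over 2^J — stated by counting), then
    𝓘' = { I ∪ ((2k+1) − ({1,…,k}∖I)) : I ∈ 𝓘 } is a paired q-uniform family of
    subsets of {1,…,2k}: every member is 2k-paired, and for every J ⊆ {1,…,2k} of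
    size q disjoint from (2k+1)−J, intersections with J are uniform. -/
theorem pairing_preserves_q_uniformity (k q : ℕ)
    (𝓘 : Finset (Finset ℕ)) (h𝓘ne : 𝓘.Nonempty)
    (hsub : ∀ I ∈ 𝓘, I ⊆ Finset.Icc 1 k)
    (hunif : ∀ J ⊆ Finset.Icc 1 k, J.card = q → ∀ I' ⊆ J,
      (𝓘.filter (fun I => I ∩ J = I')).card * 2 ^ q = 𝓘.card) :
    (∀ I' ∈ 𝓘.image (fun I => I ∪ ((Finset.Icc 1 k \ I).image (fun i => 2 * k + 1 - i))),
        I'.image (fun i => 2 * k + 1 - i) = Finset.Icc 1 (2 * k) \ I')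
    ∧ (∀ J ⊆ Finset.Icc 1 (2 * k), J.card = q →
        Disjoint J (J.image (fun i => 2 * k + 1 - i)) → ∀ I' ⊆ J,
        ((𝓘.image (fun I => I ∪ ((Finset.Icc 1 k \ I).image (fun i => 2 * k + 1 - i)))).filter
            (fun I => I ∩ J = I')).card * 2 ^ q
          = (𝓘.image (fun I => I ∪ ((Finset.Icc 1 k \ I).image
              (fun i => 2 * k + 1 - i)))).card) :=
  pairing_preserves_q_uniformity_general k q 𝓘 hsub hunif
end

section
/- Let μ' be the empirical distribution of q ≥ n/ε² i.i.d. samples from a distribution μ over {1,…,n}, with n ≥ 16 and ε ∈ (0,1). Then with probability at least 8/9: (a) d_TV(μ, μ') ≤ ε, and (b) μ'(i) ≤ 2·max{ε², μ(i)} for every 1 ≤ i ≤ n. -/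
/-!
Write `c_i` for the number of samples equal to `i`. Since `∑ μ i = ∑ c_i / q = 1`, the total
variation distance is `∑_{i ∈ A} (μ i - c_i / q)` for `A = {i | c_i / q < μ i}`, so if it
exceeds `ε` then the samples landing in some `A ⊆ {1,…,n}` fall short of their mean
`q μ(A)` by more than `ε q`. The Chernoff–Hoeffding bound makes this happen with probability
at most `exp (-2 ε² q) ≤ exp (-2 n)` for each of the `2 ^ n` sets `A`. Likewise, with
`m_i = max ε² (μ i) ≥ μ i`, the exponential moment at `log 2` gives
`Pr[c_i ≥ 2 m_i q] ≤ (e / 4) ^ (m_i q) ≤ (e / 4) ^ n`. A union bound over all these events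
leaves failure probability at most `1/18 + 1/18`.
-/

open Finset Real MeasureTheory ProbabilityTheory

lemma sum_le_sum_sum_of_forall_exists_mem {β κ : Type*} {w : β → ℝ} (hw : ∀ b, 0 ≤ w b)
    {S : Finset β} {K : Finset κ} {T : κ → Finset β} (hST : ∀ b ∈ S, ∃ k ∈ K, b ∈ T k) :
    ∑ b ∈ S, w b ≤ ∑ k ∈ K, ∑ b ∈ T k, w b := by
  classical
  calc ∑ b ∈ S, w b ≤ ∑ b ∈ S, ∑ k ∈ K, if b ∈ T k then w b else 0 := by
        refine sum_le_sum fun b hb => ?_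
        obtain ⟨k, hk, hbk⟩ := hST b hb
        refine (if_pos hbk).symm.le.trans (single_le_sum (f := fun k => if b ∈ T k then w b else 0)
          (fun k _ => ?_) hk)
        split_ifs <;> simp [hw]
    _ = ∑ k ∈ K, ∑ b ∈ S ∩ T k, w b := by rw [sum_comm]; simp_rw [sum_ite_mem]
    _ ≤ ∑ k ∈ K, ∑ b ∈ T k, w b :=
        sum_le_sum fun k _ => sum_le_sum_of_subset_of_nonneg inter_subset_right fun b _ _ => hw b

lemma sub_sub_le_sum_filter_and {β : Type*} [Fintype β] {w : β → ℝ} (hw : ∀ b, 0 ≤ w b)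
    (hw1 : ∑ b, w b = 1) {P Q : β → Prop} [DecidablePred P] [DecidablePred Q] {a c : ℝ}
    (hP : ∑ b ∈ univ.filter (fun b => ¬ P b), w b ≤ a)
    (hQ : ∑ b ∈ univ.filter (fun b => ¬ Q b), w b ≤ c) :
    1 - a - c ≤ ∑ b ∈ univ.filter (fun b => P b ∧ Q b), w b := by
  classical
  have hsplit := sum_filter_add_sum_filter_not univ (fun b => P b ∧ Q b) w
  have hunion := sum_union_inter (s₁ := univ.filter (fun b => ¬ P b))
    (s₂ := univ.filter (fun b => ¬ Q b)) (f := w)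
  have hbad : univ.filter (fun b => ¬ (P b ∧ Q b))
      = univ.filter (fun b => ¬ P b) ∪ univ.filter (fun b => ¬ Q b) := by
    ext b; simp only [mem_filter, mem_univ, true_and, mem_union]; tauto
  have hinter : 0 ≤ ∑ b ∈ univ.filter (fun b => ¬ P b) ∩ univ.filter (fun b => ¬ Q b), w b :=
    sum_nonneg fun b _ => hw b
  rw [hbad] at hsplit
  linarith

lemma half_sum_abs_sub_eq_sum_filter {ι : Type*} [Fintype ι] (f g : ι → ℝ)
    (hfg : ∑ i, f i = ∑ i, g i) :
    1 / 2 * ∑ i, |f i - g i| = ∑ i ∈ univ.filter (fun i => g i < f i), (f i - g i) := by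
  have habs : ∀ i, |f i - g i| = 2 * (if g i < f i then f i - g i else 0) - (f i - g i) := by
    intro i
    split_ifs with h
    · rw [abs_of_pos (sub_pos.2 h)]; ring
    · rw [abs_of_nonpos (by linarith)]; ring
  rw [sum_filter, sum_congr rfl fun i _ => habs i, sum_sub_distrib, ← mul_sum, sum_sub_distrib,
    hfg]
  ring

/-- Hoeffding's lemma for a Bernoulli variable. -/
lemma one_add_exp_sub_one_mul_le_exp {p : ℝ} (hp0 : 0 ≤ p) (hp1 : p ≤ 1) (t : ℝ) :
    1 + (exp t - 1) * p ≤ exp (p * t + t ^ 2 / 8) := by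
  have hoeffding := (hasSubgaussianMGF_of_mem_Icc (μ := bernoulliMeasure true false ⟨p, hp0, hp1⟩)
    (X := fun b => if b then (1 : ℝ) else 0) (a := 0) (b := 1) .of_discrete
    (ae_of_all _ fun b => by cases b <;> simp)).mgf_le t
  norm_num [mgf, integral_bernoulliMeasure] at hoeffding
  have hcentred : p * exp (t * (1 - p)) + (1 - p) * exp (-(t * p))
      = exp (-(p * t)) * (1 + (exp t - 1) * p) := by
    rw [show t * (1 - p) = t + -(p * t) by ring, exp_add]; ring_nf
  rw [hcentred, ← le_div_iff₀' (exp_pos _), ← exp_sub] at hoeffding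
  exact hoeffding.trans_eq (congrArg exp (by ring))

lemma two_pow_mul_exp_neg_two_mul_le {n : ℕ} (hn : 5 ≤ n) : 2 ^ n * exp (-2 * n) ≤ 1 / 18 := by
  have hbase : 2 * exp (-2) ≤ 1 / 2 := by
    rw [exp_neg, show (2 : ℝ) = 1 + 1 by norm_num, exp_add]
    have := exp_one_gt_d9
    rw [← div_eq_mul_inv, div_le_iff₀ (by positivity)]
    nlinarith
  calc 2 ^ n * exp (-2 * n) = (2 * exp (-2)) ^ n := by
        rw [mul_pow, ← exp_nat_mul]; ring_nf
    _ ≤ (1 / 2) ^ n := by gcongr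
    _ ≤ (1 / 2) ^ 5 := pow_le_pow_of_le_one (by norm_num) (by norm_num) hn
    _ ≤ 1 / 18 := by norm_num

lemma natCast_mul_exp_one_sub_two_mul_log_two_mul_le {n : ℕ} (hn : 16 ≤ n) :
    n * exp ((1 - 2 * log 2) * n) ≤ 1 / 18 := by
  have hbase : exp (1 - 2 * log 2) ≤ 17 / 25 := by
    rw [exp_sub, two_mul, exp_add, exp_log two_pos, div_le_iff₀ (by norm_num)]
    linarith [exp_one_lt_d9]
  have hgeom : (n : ℝ) * (17 / 25) ^ n ≤ 1 / 18 := by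
    induction n, hn using Nat.le_induction with
    | base => norm_num
    | succ k hk ih =>
      have hk' : (16 : ℝ) ≤ k := by exact_mod_cast hk
      rw [pow_succ]; push_cast
      nlinarith [pow_pos (by norm_num : (0 : ℝ) < 17 / 25) k]
  calc n * exp ((1 - 2 * log 2) * n) = n * exp (1 - 2 * log 2) ^ n := by
        rw [← exp_nat_mul]; ring_nf
    _ ≤ n * (17 / 25) ^ n := by gcongr
    _ ≤ 1 / 18 := hgeom

section Sampling

variable {α : Type*} [DecidableEq α] {q : ℕ}

lemma sum_card_filter_eq_card_filter_mem (s : Fin q → α) (A : Finset α) :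
    ∑ i ∈ A, #{j | s j = i} = #{j | s j ∈ A} := by
  simp only [card_filter]
  rw [sum_comm]
  simp

variable [Fintype α]

lemma sum_prod_mul_exp_card_filter {μ : α → ℝ} (hμ1 : ∑ a, μ a = 1) (A : Finset α) (t : ℝ) :
    ∑ s : Fin q → α, (∏ j, μ (s j)) * exp (t * #{j | s j ∈ A})
      = (1 + (exp t - 1) * ∑ a ∈ A, μ a) ^ q := by
  have hexp : ∀ s : Fin q → α,
      exp (t * #{j | s j ∈ A}) = ∏ j, if s j ∈ A then exp t else 1 := by
    intro s
    rw [card_filter, Nat.cast_sum, mul_sum, exp_sum]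
    refine prod_congr rfl fun j _ => ?_
    split_ifs <;> simp
  have hbase : ∑ a, μ a * (if a ∈ A then exp t else 1) = 1 + (exp t - 1) * ∑ a ∈ A, μ a := by
    calc ∑ a, μ a * (if a ∈ A then exp t else 1)
        = ∑ a, (μ a + (exp t - 1) * if a ∈ A then μ a else 0) :=
          sum_congr rfl fun a _ => by split_ifs <;> ring
      _ = 1 + (exp t - 1) * ∑ a ∈ A, μ a := by
          rw [sum_add_distrib, ← mul_sum, sum_ite_mem, univ_inter, hμ1]
  rw [← hbase, Fintype.sum_pow]
  simp_rw [hexp, prod_mul_distrib]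

variable {μ : α → ℝ}

lemma sum_prod_le_exp_neg_mul_pow (hμ0 : ∀ a, 0 ≤ μ a) (hμ1 : ∑ a, μ a = 1)
    {A : Finset α} {t c : ℝ} {S : Finset (Fin q → α)}
    (hS : ∀ s ∈ S, c ≤ t * #{j | s j ∈ A}) :
    ∑ s ∈ S, ∏ j, μ (s j) ≤ exp (-c) * (1 + (exp t - 1) * ∑ a ∈ A, μ a) ^ q := by
  have hw : ∀ s : Fin q → α, 0 ≤ ∏ j, μ (s j) := fun s => prod_nonneg fun j _ => hμ0 _
  calc ∑ s ∈ S, ∏ j, μ (s j)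
      ≤ ∑ s ∈ S, (∏ j, μ (s j)) * exp (t * #{j | s j ∈ A} - c) :=
        sum_le_sum fun s hs => le_mul_of_one_le_right (hw s) (one_le_exp (by linarith [hS s hs]))
    _ ≤ ∑ s : Fin q → α, (∏ j, μ (s j)) * exp (t * #{j | s j ∈ A} - c) :=
        sum_le_sum_of_subset_of_nonneg (subset_univ S) fun s _ _ =>
          mul_nonneg (hw s) (exp_pos _).le
    _ = exp (-c) * (1 + (exp t - 1) * ∑ a ∈ A, μ a) ^ q := by
        rw [← sum_prod_mul_exp_card_filter hμ1, mul_sum]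
        refine sum_congr rfl fun s _ => ?_
        rw [sub_eq_add_neg, exp_add]
        ring

lemma sum_prod_filter_card_le_sub_le (hμ0 : ∀ a, 0 ≤ μ a) (hμ1 : ∑ a, μ a = 1)
    (A : Finset α) {ε : ℝ} (hε : 0 ≤ ε) :
    ∑ s ∈ univ.filter (fun s : Fin q → α => (#{j | s j ∈ A} : ℝ) ≤ (∑ a ∈ A, μ a - ε) * q),
      ∏ j, μ (s j) ≤ exp (-2 * ε ^ 2 * q) := by
  set p := ∑ a ∈ A, μ a
  have hp0 : 0 ≤ p := sum_nonneg fun a _ => hμ0 a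
  have hp1 : p ≤ 1 := hμ1 ▸ sum_le_univ_sum_of_nonneg hμ0
  -- `t = -4ε` minimises the exponent `t ε q + t² q / 8` left by Hoeffding's lemma
  calc _ ≤ exp (-(-4 * ε * ((p - ε) * q))) * (1 + (exp (-4 * ε) - 1) * p) ^ q :=
        sum_prod_le_exp_neg_mul_pow hμ0 hμ1 fun s hs => by
          have := (mem_filter.1 hs).2
          nlinarith
    _ ≤ exp (-(-4 * ε * ((p - ε) * q))) * exp (p * (-4 * ε) + (-4 * ε) ^ 2 / 8) ^ q := by
        gcongr
        · nlinarith [exp_pos (-4 * ε)]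
        · exact one_add_exp_sub_one_mul_le_exp hp0 hp1 _
    _ = exp (-2 * ε ^ 2 * q) := by
        rw [← exp_nat_mul, ← exp_add]; ring_nf

lemma sum_prod_filter_two_mul_le_card_le (hμ0 : ∀ a, 0 ≤ μ a) (hμ1 : ∑ a, μ a = 1)
    {A : Finset α} {m : ℝ} (hm : ∑ a ∈ A, μ a ≤ m) :
    ∑ s ∈ univ.filter (fun s : Fin q → α => 2 * m * q ≤ (#{j | s j ∈ A} : ℝ)),
      ∏ j, μ (s j) ≤ exp ((1 - 2 * log 2) * m * q) := by
  set p := ∑ a ∈ A, μ a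
  have hp0 : 0 ≤ p := sum_nonneg fun a _ => hμ0 a
  calc _ ≤ exp (-(log 2 * (2 * m * q))) * (1 + (exp (log 2) - 1) * p) ^ q :=
        sum_prod_le_exp_neg_mul_pow hμ0 hμ1 fun s hs =>
          mul_le_mul_of_nonneg_left (mem_filter.1 hs).2 (log_nonneg one_le_two)
    _ ≤ exp (-(log 2 * (2 * m * q))) * exp m ^ q := by
        rw [exp_log two_pos]
        gcongr
        linarith [add_one_le_exp p, exp_le_exp.2 hm]
    _ = exp ((1 - 2 * log 2) * m * q) := by
        rw [← exp_nat_mul, ← exp_add]; ring_nf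

lemma sum_prod_filter_not_half_sum_abs_le_le (hμ0 : ∀ a, 0 ≤ μ a) (hμ1 : ∑ a, μ a = 1)
    {ε : ℝ} (hε : 0 ≤ ε) (hq : 0 < q) :
    ∑ s ∈ univ.filter (fun s : Fin q → α =>
        ¬ 1 / 2 * ∑ i, |μ i - (#{j | s j = i} : ℝ) / q| ≤ ε), ∏ j, μ (s j)
      ≤ 2 ^ Fintype.card α * exp (-2 * ε ^ 2 * q) := by
  have hq' : (0 : ℝ) < q := Nat.cast_pos.2 hq
  have hshortfall : ∀ s : Fin q → α, ¬ 1 / 2 * ∑ i, |μ i - (#{j | s j = i} : ℝ) / q| ≤ ε →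
      let A := univ.filter (fun i => (#{j | s j = i} : ℝ) / q < μ i)
      (#{j | s j ∈ A} : ℝ) ≤ (∑ a ∈ A, μ a - ε) * q := by
    intro s hs A
    have hmass : ∑ i, μ i = ∑ i, (#{j | s j = i} : ℝ) / q := by
      rw [hμ1, ← sum_div, ← Nat.cast_sum, sum_card_filter_eq_card_filter_mem]
      simp [hq'.ne']
    rw [half_sum_abs_sub_eq_sum_filter _ _ hmass, sum_sub_distrib, ← sum_div, ← Nat.cast_sum,
      sum_card_filter_eq_card_filter_mem, not_le, lt_sub_comm, div_lt_iff₀ hq'] at hs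
    exact hs.le
  calc _ ≤ ∑ A ∈ univ.powerset, ∑ s ∈ univ.filter (fun s : Fin q → α =>
          (#{j | s j ∈ A} : ℝ) ≤ (∑ a ∈ A, μ a - ε) * q), ∏ j, μ (s j) :=
        sum_le_sum_sum_of_forall_exists_mem (fun s => prod_nonneg fun j _ => hμ0 _)
          fun s hs => ⟨_, mem_powerset.2 (subset_univ _),
            mem_filter.2 ⟨mem_univ _, hshortfall s (mem_filter.1 hs).2⟩⟩
    _ ≤ ∑ A ∈ (univ : Finset α).powerset, exp (-2 * ε ^ 2 * q) :=
        sum_le_sum fun A _ => sum_prod_filter_card_le_sub_le hμ0 hμ1 A hε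
    _ = 2 ^ Fintype.card α * exp (-2 * ε ^ 2 * q) := by
        rw [sum_const, card_powerset, card_univ, nsmul_eq_mul, Nat.cast_pow, Nat.cast_ofNat]

lemma sum_prod_filter_not_forall_div_le_two_mul_le (hμ0 : ∀ a, 0 ≤ μ a) (hμ1 : ∑ a, μ a = 1)
    {m : α → ℝ} (hm : ∀ i, μ i ≤ m i) (hq : 0 < q) :
    ∑ s ∈ univ.filter (fun s : Fin q → α => ¬ ∀ i, (#{j | s j = i} : ℝ) / q ≤ 2 * m i),
        ∏ j, μ (s j)
      ≤ ∑ i, exp ((1 - 2 * log 2) * m i * q) := by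
  have hq' : (0 : ℝ) < q := Nat.cast_pos.2 hq
  calc _ ≤ ∑ i, ∑ s ∈ univ.filter (fun s : Fin q → α =>
          2 * m i * q ≤ (#{j | s j ∈ ({i} : Finset α)} : ℝ)), ∏ j, μ (s j) :=
        sum_le_sum_sum_of_forall_exists_mem (fun s => prod_nonneg fun j _ => hμ0 _)
          fun s hs => by
            obtain ⟨i, hi⟩ := not_forall.1 (mem_filter.1 hs).2
            refine ⟨i, mem_univ _, mem_filter.2 ⟨mem_univ _, ?_⟩⟩
            simp only [mem_singleton]
            exact (le_div_iff₀ hq').1 (not_le.1 hi).le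
    _ ≤ ∑ i, exp ((1 - 2 * log 2) * m i * q) :=
        sum_le_sum fun i _ => sum_prod_filter_two_mul_le_card_le hμ0 hμ1 (by simpa using hm i)

end Sampling

theorem learn_simple_distribution_general (n q : ℕ) (hn : 16 ≤ n)
    (ε : ℝ) (hε0 : 0 < ε)
    (hq : (n : ℝ) / ε ^ 2 ≤ q)
    (μ : Fin n → ℝ) (hμ0 : ∀ i, 0 ≤ μ i) (hμ1 : ∑ i, μ i = 1) :
    (8/9 : ℝ) ≤ ∑ s ∈ Finset.univ.filter (fun s : Fin q → Fin n =>
        (1/2) * (∑ i, |μ i - ((Finset.univ.filter (fun j => s j = i)).card : ℝ) / q|) ≤ ε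
        ∧ ∀ i, ((Finset.univ.filter (fun j => s j = i)).card : ℝ) / q
            ≤ 2 * max (ε ^ 2) (μ i)),
      ∏ j, μ (s j) := by
  have hnq : (n : ℝ) ≤ ε ^ 2 * q := (div_le_iff₀' (by positivity)).1 hq
  have hq0 : 0 < q :=
    Nat.cast_pos.1 ((div_pos (Nat.cast_pos.2 (by omega)) (by positivity)).trans_le hq)
  have hweights : ∑ s : Fin q → Fin n, ∏ j, μ (s j) = 1 := by
    rw [← Fintype.sum_pow, hμ1, one_pow]
  have htv : 2 ^ n * exp (-2 * ε ^ 2 * q) ≤ 1 / 18 :=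
    calc 2 ^ n * exp (-2 * ε ^ 2 * q) ≤ 2 ^ n * exp (-2 * n) := by
          gcongr 2 ^ n * exp ?_; nlinarith
      _ ≤ 1 / 18 := two_pow_mul_exp_neg_two_mul_le (by omega)
  have hmass : ∑ i, exp ((1 - 2 * log 2) * max (ε ^ 2) (μ i) * q) ≤ 1 / 18 :=
    calc _ ≤ ∑ _i : Fin n, exp ((1 - 2 * log 2) * n) := by
          refine sum_le_sum fun i _ => exp_le_exp.2 ?_
          rw [mul_assoc]
          exact mul_le_mul_of_nonpos_left (hnq.trans (by gcongr; exact le_max_left _ _))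
            (by linarith [log_two_gt_d9])
      _ ≤ 1 / 18 := by simpa using natCast_mul_exp_one_sub_two_mul_log_two_mul_le hn
  rw [show (8 / 9 : ℝ) = 1 - 1 / 18 - 1 / 18 by norm_num]
  apply sub_sub_le_sum_filter_and (fun s => prod_nonneg fun j _ => hμ0 _) hweights
  · refine (sum_prod_filter_not_half_sum_abs_le_le hμ0 hμ1 hε0.le hq0).trans ?_
    rwa [Fintype.card_fin]
  · -- `∀ i : Fin n` is decided by `Nat.decidableForallFin` here, by `Fintype` in the lemma
    convert (show _ ≤ (1 / 18 : ℝ) from (sum_prod_filter_not_forall_div_le_two_mul_le hμ0 hμ1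
      (m := fun i => max (ε ^ 2) (μ i)) (fun i => le_max_right _ _) hq0).trans hmass) using 3

/-- Learning a simple distribution: for n ≥ 16, ε ∈ (0,1) and q ≥ n/ε² i.i.d.
    samples from μ over {1,…,n}, with probability ≥ 8/9 the empirical
    distribution μ' satisfies d_TV(μ,μ') ≤ ε and μ'(i) ≤ 2·max{ε², μ(i)} for all i. -/
theorem learn_simple_distribution (n q : ℕ) (hn : 16 ≤ n)
    (ε : ℝ) (hε0 : 0 < ε) (hε1 : ε < 1)
    (hq : (n : ℝ) / ε ^ 2 ≤ q)
    (μ : Fin n → ℝ) (hμ0 : ∀ i, 0 ≤ μ i) (hμ1 : ∑ i, μ i = 1) :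
    (8/9 : ℝ) ≤ ∑ s ∈ Finset.univ.filter (fun s : Fin q → Fin n =>
        (1/2) * (∑ i, |μ i - ((Finset.univ.filter (fun j => s j = i)).card : ℝ) / q|) ≤ ε
        ∧ ∀ i, ((Finset.univ.filter (fun j => s j = i)).card : ℝ) / q
            ≤ 2 * max (ε ^ 2) (μ i)),
      ∏ j, μ (s j) :=
  learn_simple_distribution_general n q hn ε hε0 hq μ hμ0 hμ1
end
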